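/- Let X be a finite quandle, A an abelian group, and θ a quandle 3-cocycle of X with values in A (written multiplicatively). Define Φ(θ) = Σ_{(y₁,y₂)} θ(y₁*y₂, y₁, y₂)·θ(y₁*y₂, y₂, y₁*y₂)·θ(y₂, y₁*y₂, y₁)·θ(y₁, y₁*y₂, y₂)⁻¹·θ(y₁*y₂, y₁, y₁*y₂)⁻¹·θ(y₁, y₂, y₁*y₂)⁻¹ ∈ Z[A], summed over pairs (y₁,y₂) ∈ X² with y₂ = (y₁*y₂)*y₁ and y₂ = (y₂*y₁)*y₁. For X = R_3, A = Z_3 = ⟨t⟩, and θ = t^(−χ_{(0,1,0)} + χ_{(0,2,0)} − χ_{(0,2,1)} + χ_{(1,0,1)} + χ_{(1,0,2)} + χ_{(2,0,2)} + χ_{(2,1,2)}), one has Φ(θ) = 3 + 6t. -/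

import Mathlib

/-- The dihedral quandle `R₃` operation on `ZMod 3`: `i * j = 2j − i`. -/
def r3op (i j : ZMod 3) : ZMod 3 := 2 * j - i

/-- Characteristic function `χ_{(a,b,c)}` on `R₃³`, valued in `ℤ₃`. -/
def chi3 (a b c p q r : ZMod 3) : ZMod 3 :=
  if p = a ∧ q = b ∧ r = c then 1 else 0

/-- The exponent of the 3-cocycle:
`−χ_{(0,1,0)} + χ_{(0,2,0)} − χ_{(0,2,1)} + χ_{(1,0,1)} + χ_{(1,0,2)}
 + χ_{(2,0,2)} + χ_{(2,1,2)}`. -/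
def thetaExp (p q r : ZMod 3) : ZMod 3 :=
  -chi3 0 1 0 p q r + chi3 0 2 0 p q r - chi3 0 2 1 p q r +
    chi3 1 0 1 p q r + chi3 1 0 2 p q r + chi3 2 0 2 p q r +
    chi3 2 1 2 p q r

/-- The 3-cocycle `θ = t^(thetaExp)`, valued in the multiplicative cyclic
group `ℤ₃ = ⟨t⟩` of order 3. -/
def theta (p q r : ZMod 3) : Multiplicative (ZMod 3) :=
  Multiplicative.ofAdd (thetaExp p q r)

/-- The state-sum weight of a coloring `(y₁, y₂)` for the 2-twist spun
trefoil. -/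
def weight (y : ZMod 3 × ZMod 3) : Multiplicative (ZMod 3) :=
  theta (r3op y.1 y.2) y.1 y.2 * theta (r3op y.1 y.2) y.2 (r3op y.1 y.2) *
    theta y.2 (r3op y.1 y.2) y.1 * (theta y.1 (r3op y.1 y.2) y.2)⁻¹ *
    (theta (r3op y.1 y.2) y.1 (r3op y.1 y.2))⁻¹ *
    (theta y.1 y.2 (r3op y.1 y.2))⁻¹

/-- The state-sum `Φ(θ)` in the group ring `ℤ[ℤ₃]`, summed over the pairs
`(y₁, y₂) ∈ X²` with `y₂ = (y₁*y₂)*y₁` and `y₂ = (y₂*y₁)*y₁`. -/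
noncomputable def stateSum : MonoidAlgebra ℤ (Multiplicative (ZMod 3)) :=
  ∑ y ∈ Finset.univ.filter
      (fun y : ZMod 3 × ZMod 3 =>
        y.2 = r3op (r3op y.1 y.2) y.1 ∧ y.2 = r3op (r3op y.2 y.1) y.1),
    MonoidAlgebra.single (weight y) (1 : ℤ)

/-!
In `R₃` the operation satisfies `(i * j) * j = i` and, since `3 = 0`, also `(i * j) * i = j`,
so every pair `(y₁, y₂)` is admissible. A direct check shows that the weight of `(y₁, y₂)` is `1`
on the three diagonal pairs and `t` on the six others, whence `Φ(θ) = 3 + 6t`.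
-/

theorem r3op_r3op_left (i j : ZMod 3) : r3op (r3op i j) i = j := by
  unfold r3op
  have h3 : (3 : ZMod 3) = 0 := rfl
  linear_combination (i - j) * h3

theorem r3op_r3op_right (i j : ZMod 3) : r3op (r3op i j) j = i := by
  unfold r3op; ring

theorem weight_eq (y : ZMod 3 × ZMod 3) :
    weight y = if y.1 = y.2 then 1 else Multiplicative.ofAdd 1 := by
  revert y; decide

theorem stateSum_eq_sum_weight :
    stateSum = ∑ y : ZMod 3 × ZMod 3, MonoidAlgebra.single (weight y) (1 : ℤ) := by
  rw [stateSum, Finset.filter_true_of_mem]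
  intro y _
  exact ⟨(r3op_r3op_left y.1 y.2).symm, (r3op_r3op_right y.2 y.1).symm⟩

/-- For `X = R₃`, `A = ℤ₃ = ⟨t⟩`, and the 3-cocycle `θ` above, the state-sum
invariant of the 2-twist spun trefoil is `Φ(θ) = 3 + 6t`. -/
theorem stateSum_twist_spun_trefoil :
    stateSum = 3 + MonoidAlgebra.single
      (Multiplicative.ofAdd (1 : ZMod 3)) (6 : ℤ) := by
  have hdiag : (Finset.univ.filter fun y : ZMod 3 × ZMod 3 => y.1 = y.2).card = 3 := by
    decide
  have hoff : (Finset.univ.filter fun y : ZMod 3 × ZMod 3 => ¬y.1 = y.2).card = 6 := by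
    decide
  simp only [stateSum_eq_sum_weight, weight_eq, apply_ite (MonoidAlgebra.single · (1 : ℤ)),
    Finset.sum_ite, Finset.sum_const, hdiag, hoff]
  rw [← MonoidAlgebra.one_def, MonoidAlgebra.smul_single, nsmul_one, nsmul_one]
  simp only [Nat.cast_ofNat]
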